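/- arXiv:1610.00780 — 9 statements merged into one kernel-verified Lean document; each statement's English description precedes it below -/
import Mathlib

section
/- Let D₁, D₂ ⊆ [0,1] be closed sets each containing 0 and 1, and let M_S and W_S denote the restrictions of M(u,v) = min(u,v) and W(u,v) = max(u+v−1,0) to D₁ × D₂. Then d(M_S) = 1/4 if and only if (1/2, 1/2) ∈ D₁ × D₂, and d(W_S) = −1/4 if and only if (1/2, 1/2) ∈ D₁ × D₂. -/
/-- A bivariate subcopula: `S : D₁ × D₂ → [0,1]` where `D₁, D₂ ⊆ [0,1]` each
contain `0` and `1`, with grounded/marginal boundary conditions and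
2-increasingness. -/
def IsSubcopula (D₁ D₂ : Set ℝ) (S : ℝ → ℝ → ℝ) : Prop :=
  D₁ ⊆ Set.Icc 0 1 ∧ D₂ ⊆ Set.Icc 0 1 ∧
  (0 : ℝ) ∈ D₁ ∧ (1 : ℝ) ∈ D₁ ∧ (0 : ℝ) ∈ D₂ ∧ (1 : ℝ) ∈ D₂ ∧
  (∀ u ∈ D₁, ∀ v ∈ D₂, S u v ∈ Set.Icc (0 : ℝ) 1) ∧
  (∀ u ∈ D₁, S u 0 = 0) ∧ (∀ v ∈ D₂, S 0 v = 0) ∧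
  (∀ u ∈ D₁, S u 1 = u) ∧ (∀ v ∈ D₂, S 1 v = v) ∧
  (∀ u₁ ∈ D₁, ∀ u₂ ∈ D₁, ∀ v₁ ∈ D₂, ∀ v₂ ∈ D₂, u₁ ≤ u₂ → v₁ ≤ v₂ →
    0 ≤ S u₂ v₂ - S u₂ v₁ - S u₁ v₂ + S u₁ v₁)

/-- `d(S) = sup{S(u,v) − uv} − sup{uv − S(u,v)}`, suprema over `D₁ × D₂`. -/
noncomputable def dval (D₁ D₂ : Set ℝ) (S : ℝ → ℝ → ℝ) : ℝ :=
  sSup {x : ℝ | ∃ u ∈ D₁, ∃ v ∈ D₂, x = S u v - u * v} -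
  sSup {x : ℝ | ∃ u ∈ D₁, ∃ v ∈ D₂, x = u * v - S u v}

private lemma set_eq_image (D₁ D₂ : Set ℝ) (f : ℝ → ℝ → ℝ) :
    {x : ℝ | ∃ u ∈ D₁, ∃ v ∈ D₂, x = f u v} =
      (fun p : ℝ × ℝ => f p.1 p.2) '' (D₁ ×ˢ D₂) := by
  ext x; constructor
  · rintro ⟨u, hu, v, hv, rfl⟩; exact ⟨(u, v), ⟨hu, hv⟩, rfl⟩
  · rintro ⟨⟨u, v⟩, ⟨hu, hv⟩, rfl⟩; exact ⟨u, hu, v, hv, rfl⟩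

private lemma sSup_mem_val (D₁ D₂ : Set ℝ)
    (hD₁ : D₁ ⊆ Set.Icc 0 1) (hD₂ : D₂ ⊆ Set.Icc 0 1)
    (hc₁ : IsClosed D₁) (hc₂ : IsClosed D₂)
    (h01 : (0 : ℝ) ∈ D₁) (h02 : (0 : ℝ) ∈ D₂)
    (f : ℝ → ℝ → ℝ) (hf : Continuous fun p : ℝ × ℝ => f p.1 p.2) :
    sSup {x : ℝ | ∃ u ∈ D₁, ∃ v ∈ D₂, x = f u v} ∈
      {x : ℝ | ∃ u ∈ D₁, ∃ v ∈ D₂, x = f u v} := by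
  rw [set_eq_image]
  have hK : IsCompact (D₁ ×ˢ D₂) :=
    ((isCompact_Icc.of_isClosed_subset hc₁ hD₁)).prod
      (isCompact_Icc.of_isClosed_subset hc₂ hD₂)
  have hA : IsCompact ((fun p : ℝ × ℝ => f p.1 p.2) '' (D₁ ×ˢ D₂)) :=
    hK.image hf
  exact hA.sSup_mem ⟨f 0 0, ⟨(0, 0), ⟨h01, h02⟩, rfl⟩⟩

/-- For closed domains `D₁, D₂` containing `0` and `1`:
`d(M_S) = 1/4` iff `(1/2,1/2) ∈ D₁ × D₂`, and `d(W_S) = −1/4` iff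
`(1/2,1/2) ∈ D₁ × D₂`. -/
theorem dval_quarter_iff_half_mem (D₁ D₂ : Set ℝ)
    (hD₁ : D₁ ⊆ Set.Icc 0 1) (hD₂ : D₂ ⊆ Set.Icc 0 1)
    (hc₁ : IsClosed D₁) (hc₂ : IsClosed D₂)
    (h01 : (0 : ℝ) ∈ D₁) (h11 : (1 : ℝ) ∈ D₁)
    (h02 : (0 : ℝ) ∈ D₂) (h12 : (1 : ℝ) ∈ D₂) :
    (dval D₁ D₂ (fun u v => min u v) = 1/4 ↔ ((1:ℝ)/2 ∈ D₁ ∧ (1:ℝ)/2 ∈ D₂)) ∧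
    (dval D₁ D₂ (fun u v => max (u + v - 1) 0) = -(1/4) ↔
      ((1:ℝ)/2 ∈ D₁ ∧ (1:ℝ)/2 ∈ D₂)) := by
  constructor
  · -- M case
    have hzero : sSup {x : ℝ | ∃ u ∈ D₁, ∃ v ∈ D₂, x = u * v - min u v} = 0 := by
      apply IsGreatest.csSup_eq
      constructor
      · exact ⟨0, h01, 0, h02, by norm_num⟩
      · rintro x ⟨u, hu, v, hv, rfl⟩
        obtain ⟨hu0, hu1⟩ := hD₁ hu
        obtain ⟨hv0, hv1⟩ := hD₂ hv
        rcases min_cases u v with ⟨hm, _⟩ | ⟨hm, _⟩ <;> rw [hm] <;> nlinarith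
    have hbound : ∀ u ∈ D₁, ∀ v ∈ D₂, min u v - u * v ≤ 1/4 := by
      intro u hu v hv
      obtain ⟨hu0, hu1⟩ := hD₁ hu
      obtain ⟨hv0, hv1⟩ := hD₂ hv
      rcases min_cases u v with ⟨hm, hle⟩ | ⟨hm, hle⟩ <;> rw [hm]
      · nlinarith [mul_nonneg hu0 (by linarith : (0:ℝ) ≤ v - u), sq_nonneg (u - 1/2)]
      · nlinarith [mul_nonneg hv0 (by linarith : (0:ℝ) ≤ u - v), sq_nonneg (v - 1/2)]
    unfold dval
    rw [hzero, sub_zero]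
    constructor
    · intro hsup
      have hmem := sSup_mem_val D₁ D₂ hD₁ hD₂ hc₁ hc₂ h01 h02
        (fun u v => min u v - u * v) (by fun_prop)
      rw [hsup] at hmem
      obtain ⟨u, hu, v, hv, heq⟩ := hmem
      obtain ⟨hu0, hu1⟩ := hD₁ hu
      obtain ⟨hv0, hv1⟩ := hD₂ hv
      have : u = 1/2 ∧ v = 1/2 := by
        rcases min_cases u v with ⟨hm, hle⟩ | ⟨hm, hle⟩ <;> simp only [hm] at heq
        · have h1 : (u - 1/2)^2 ≤ 0 := by
            nlinarith [mul_nonneg hu0 (by linarith : (0:ℝ) ≤ v - u)]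
          have h2 : u = 1/2 := by
            have := sq_eq_zero_iff.mp (le_antisymm h1 (sq_nonneg _)); linarith
          subst h2; exact ⟨rfl, by linarith⟩
        · have h1 : (v - 1/2)^2 ≤ 0 := by
            nlinarith [mul_nonneg hv0 (by linarith : (0:ℝ) ≤ u - v)]
          have h2 : v = 1/2 := by
            have := sq_eq_zero_iff.mp (le_antisymm h1 (sq_nonneg _)); linarith
          subst h2; exact ⟨by linarith, rfl⟩
      exact ⟨this.1 ▸ hu, this.2 ▸ hv⟩
    · rintro ⟨hh1, hh2⟩
      apply IsGreatest.csSup_eq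
      constructor
      · exact ⟨1/2, hh1, 1/2, hh2, by norm_num⟩
      · rintro x ⟨u, hu, v, hv, rfl⟩
        exact hbound u hu v hv
  · -- W case
    have hzero : sSup {x : ℝ | ∃ u ∈ D₁, ∃ v ∈ D₂,
        x = max (u + v - 1) 0 - u * v} = 0 := by
      apply IsGreatest.csSup_eq
      constructor
      · exact ⟨0, h01, 0, h02, by norm_num⟩
      · rintro x ⟨u, hu, v, hv, rfl⟩
        obtain ⟨hu0, hu1⟩ := hD₁ hu
        obtain ⟨hv0, hv1⟩ := hD₂ hv
        rcases max_cases (u + v - 1) 0 with ⟨hm, hle⟩ | ⟨hm, hle⟩ <;> rw [hm]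
        · nlinarith [mul_nonneg (by linarith : (0:ℝ) ≤ 1 - u) (by linarith : (0:ℝ) ≤ 1 - v)]
        · nlinarith [mul_nonneg hu0 hv0]
    have hbound : ∀ u ∈ D₁, ∀ v ∈ D₂, u * v - max (u + v - 1) 0 ≤ 1/4 := by
      intro u hu v hv
      obtain ⟨hu0, hu1⟩ := hD₁ hu
      obtain ⟨hv0, hv1⟩ := hD₂ hv
      rcases max_cases (u + v - 1) 0 with ⟨hm, hle⟩ | ⟨hm, hle⟩ <;> rw [hm]
      · nlinarith [sq_nonneg (u - v), mul_nonneg (by linarith : (0:ℝ) ≤ 2 - u - v) hle]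
      · nlinarith [sq_nonneg (u - v),
          mul_nonneg (by linarith : (0:ℝ) ≤ u + v) (by linarith : (0:ℝ) ≤ 1 - u - v)]
    unfold dval
    rw [hzero]
    have hkey : sSup {x : ℝ | ∃ u ∈ D₁, ∃ v ∈ D₂,
        x = u * v - max (u + v - 1) 0} = 1/4 ↔
        ((1:ℝ)/2 ∈ D₁ ∧ (1:ℝ)/2 ∈ D₂) := by
      constructor
      · intro hsup
        have hmem := sSup_mem_val D₁ D₂ hD₁ hD₂ hc₁ hc₂ h01 h02
          (fun u v => u * v - max (u + v - 1) 0) (by fun_prop)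
        rw [hsup] at hmem
        obtain ⟨u, hu, v, hv, heq⟩ := hmem
        obtain ⟨hu0, hu1⟩ := hD₁ hu
        obtain ⟨hv0, hv1⟩ := hD₂ hv
        have : u = 1/2 ∧ v = 1/2 := by
          rcases max_cases (u + v - 1) 0 with ⟨hm, hle⟩ | ⟨hm, hle⟩ <;>
            simp only [hm] at heq
          · have h1 : (u - v)^2 ≤ 0 := by
              nlinarith [mul_nonneg (by linarith : (0:ℝ) ≤ 2 - u - v) hle]
            have huv : u = v := by
              have := sq_eq_zero_iff.mp (le_antisymm h1 (sq_nonneg _)); linarith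
            subst huv
            have hp : (u - 1/2) * (u - 3/2) = 0 := by linear_combination -heq
            rcases mul_eq_zero.mp hp with h | h
            · constructor <;> linarith
            · exfalso; linarith
          · have h1 : (u - v)^2 ≤ 0 := by
              nlinarith [mul_nonneg (by linarith : (0:ℝ) ≤ u + v)
                (by linarith : (0:ℝ) ≤ 1 - u - v)]
            have huv : u = v := by
              have := sq_eq_zero_iff.mp (le_antisymm h1 (sq_nonneg _)); linarith
            subst huv
            have hp : (u - 1/2) * (u + 1/2) = 0 := by linear_combination -heq
            rcases mul_eq_zero.mp hp with h | h
            · constructor <;> linarith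
            · exfalso; linarith
        exact ⟨this.1 ▸ hu, this.2 ▸ hv⟩
      · rintro ⟨hh1, hh2⟩
        apply IsGreatest.csSup_eq
        constructor
        · exact ⟨1/2, hh1, 1/2, hh2, by norm_num⟩
        · rintro x ⟨u, hu, v, hv, rfl⟩
          exact hbound u hu v hv
    rw [← hkey]
    constructor
    · intro h; linarith
    · intro h; rw [h]; ring
end

section
/- Let S be a bivariate subcopula with domain D₁ × D₂ and let M_S, W_S be the restrictions of M(u,v) = min(u,v) and W(u,v) = max(u+v−1,0) to D₁ × D₂. If d(S) ≥ 0 and d(M_S) > 0 then 0 ≤ d(S)/d(M_S) ≤ 1; if d(S) ≤ 0 and d(W_S) < 0 then −1 ≤ −d(S)/d(W_S) ≤ 0. Consequently the monotone dependence measure satisfies −1 ≤ μ(S) ≤ +1. -/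
lemma sSup_mono_pt (D₁ D₂ : Set ℝ) (T₁ T₂ : ℝ → ℝ → ℝ)
    (hbdd : BddAbove {x : ℝ | ∃ u ∈ D₁, ∃ v ∈ D₂, x = T₂ u v})
    (hne : {x : ℝ | ∃ u ∈ D₁, ∃ v ∈ D₂, x = T₁ u v}.Nonempty)
    (h : ∀ u ∈ D₁, ∀ v ∈ D₂, T₁ u v ≤ T₂ u v) :
    sSup {x : ℝ | ∃ u ∈ D₁, ∃ v ∈ D₂, x = T₁ u v} ≤
      sSup {x : ℝ | ∃ u ∈ D₁, ∃ v ∈ D₂, x = T₂ u v} := by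
  refine csSup_le hne ?_
  rintro x ⟨u, hu, v, hv, rfl⟩
  exact (h u hu v hv).trans (le_csSup hbdd ⟨u, hu, v, hv, rfl⟩)

/-- The monotone dependence measure `μ(S)`: `d(S)/d(M_S)` when `d(S) ≥ 0` and
`d(M_S) > 0`, `−d(S)/d(W_S)` when `d(S) ≤ 0` and `d(W_S) < 0`, and `0` in the
trivial case. -/
noncomputable def mu (D₁ D₂ : Set ℝ) (S : ℝ → ℝ → ℝ) : ℝ :=
  if 0 ≤ dval D₁ D₂ S ∧ 0 < dval D₁ D₂ (fun u v => min u v) then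
    dval D₁ D₂ S / dval D₁ D₂ (fun u v => min u v)
  else if dval D₁ D₂ S ≤ 0 ∧ dval D₁ D₂ (fun u v => max (u + v - 1) 0) < 0 then
    -(dval D₁ D₂ S / dval D₁ D₂ (fun u v => max (u + v - 1) 0))
  else 0

lemma frechet_dval (D₁ D₂ : Set ℝ) (S : ℝ → ℝ → ℝ) (hS : IsSubcopula D₁ D₂ S) :
    dval D₁ D₂ (fun u v => max (u + v - 1) 0) ≤ dval D₁ D₂ S ∧
    dval D₁ D₂ S ≤ dval D₁ D₂ (fun u v => min u v) := by
  obtain ⟨h1, h2, h01, h11, h02, h12, hrange, hg1, hg2, hm1, hm2, h2inc⟩ := hS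
  -- pointwise Fréchet bounds
  have hSM : ∀ u ∈ D₁, ∀ v ∈ D₂, S u v ≤ min u v := by
    intro u hu v hv
    have ha := h2inc 0 h01 u hu v hv 1 h12 (h1 hu).1 (h2 hv).2
    have hb := h2inc u hu 1 h11 0 h02 v hv (h1 hu).2 (h2 hv).1
    rw [hm1 u hu, hg2 v hv, hg2 1 h12] at ha
    rw [hm2 v hv, hg1 u hu, hg1 1 h11] at hb
    exact le_min (by linarith) (by linarith)
  have hWS : ∀ u ∈ D₁, ∀ v ∈ D₂, max (u + v - 1) 0 ≤ S u v := by
    intro u hu v hv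
    have ha := h2inc u hu 1 h11 v hv 1 h12 (h1 hu).2 (h2 hv).2
    rw [hm2 v hv, hm1 u hu, hm1 1 h11] at ha
    exact max_le (by linarith) (hrange u hu v hv).1
  -- boundedness facts
  have hbddA : ∀ T : ℝ → ℝ → ℝ, (∀ u ∈ D₁, ∀ v ∈ D₂, T u v ∈ Set.Icc (0:ℝ) 1) →
      BddAbove {x : ℝ | ∃ u ∈ D₁, ∃ v ∈ D₂, x = T u v - u * v} := by
    intro T hT
    refine ⟨1, ?_⟩
    rintro x ⟨u, hu, v, hv, rfl⟩
    have := (hT u hu v hv).2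
    have hmul : 0 ≤ u * v := mul_nonneg (h1 hu).1 (h2 hv).1
    linarith
  have hbddB : ∀ T : ℝ → ℝ → ℝ, (∀ u ∈ D₁, ∀ v ∈ D₂, T u v ∈ Set.Icc (0:ℝ) 1) →
      BddAbove {x : ℝ | ∃ u ∈ D₁, ∃ v ∈ D₂, x = u * v - T u v} := by
    intro T hT
    refine ⟨1, ?_⟩
    rintro x ⟨u, hu, v, hv, rfl⟩
    have := (hT u hu v hv).1
    have hmul : u * v ≤ 1 := mul_le_one₀ (h1 hu).2 (h2 hv).1 (h2 hv).2
    linarith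
  have hMr : ∀ u ∈ D₁, ∀ v ∈ D₂, min u v ∈ Set.Icc (0:ℝ) 1 :=
    fun u hu v hv => ⟨le_min (h1 hu).1 (h2 hv).1, min_le_of_left_le (h1 hu).2⟩
  have hWr : ∀ u ∈ D₁, ∀ v ∈ D₂, max (u + v - 1) 0 ∈ Set.Icc (0:ℝ) 1 := by
    intro u hu v hv
    exact ⟨le_max_right _ _, max_le (by have := (h1 hu).2; have := (h2 hv).2; linarith)
      zero_le_one⟩
  -- nonemptiness via (0,0)
  have hneA : ∀ T : ℝ → ℝ → ℝ, T 0 0 = 0 →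
      ({x : ℝ | ∃ u ∈ D₁, ∃ v ∈ D₂, x = T u v - u * v}).Nonempty :=
    fun T hT => ⟨0, 0, h01, 0, h02, by simp [hT]⟩
  have hneB : ∀ T : ℝ → ℝ → ℝ, T 0 0 = 0 →
      ({x : ℝ | ∃ u ∈ D₁, ∃ v ∈ D₂, x = u * v - T u v}).Nonempty :=
    fun T hT => ⟨0, 0, h01, 0, h02, by simp [hT]⟩
  have hS00 : S 0 0 = 0 := hg1 0 h01
  have hM00 : min (0:ℝ) 0 = 0 := by simp
  have hW00 : max ((0:ℝ) + 0 - 1) 0 = 0 := by norm_num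
  constructor
  · unfold dval
    refine sub_le_sub ?_ ?_
    · exact sSup_mono_pt D₁ D₂ _ _ (hbddA S hrange) (hneA _ hW00)
        (fun u hu v hv => by simpa using sub_le_sub_right (hWS u hu v hv) (u*v))
    · exact sSup_mono_pt D₁ D₂ _ _ (hbddB _ hWr) (hneB _ hS00)
        (fun u hu v hv => by simpa using sub_le_sub_left (hWS u hu v hv) (u*v))
  · unfold dval
    refine sub_le_sub ?_ ?_
    · exact sSup_mono_pt D₁ D₂ _ _ (hbddA _ hMr) (hneA _ hS00)
        (fun u hu v hv => by simpa using sub_le_sub_right (hSM u hu v hv) (u*v))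
    · exact sSup_mono_pt D₁ D₂ _ _ (hbddB S hrange) (hneB _ hM00)
        (fun u hu v hv => by simpa using sub_le_sub_left (hSM u hu v hv) (u*v))

/-- Bounds for the monotone dependence measure: `0 ≤ d(S)/d(M_S) ≤ 1` in the
nonnegative case, `−1 ≤ −d(S)/d(W_S) ≤ 0` in the nonpositive case, and
consequently `−1 ≤ μ(S) ≤ 1`. -/
theorem mu_bounds (D₁ D₂ : Set ℝ) (S : ℝ → ℝ → ℝ) (hS : IsSubcopula D₁ D₂ S) :
    (0 ≤ dval D₁ D₂ S → 0 < dval D₁ D₂ (fun u v => min u v) →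
      0 ≤ dval D₁ D₂ S / dval D₁ D₂ (fun u v => min u v) ∧
      dval D₁ D₂ S / dval D₁ D₂ (fun u v => min u v) ≤ 1) ∧
    (dval D₁ D₂ S ≤ 0 → dval D₁ D₂ (fun u v => max (u + v - 1) 0) < 0 →
      -1 ≤ -(dval D₁ D₂ S / dval D₁ D₂ (fun u v => max (u + v - 1) 0)) ∧
      -(dval D₁ D₂ S / dval D₁ D₂ (fun u v => max (u + v - 1) 0)) ≤ 0) ∧
    (-1 ≤ mu D₁ D₂ S ∧ mu D₁ D₂ S ≤ 1) := by
  obtain ⟨hWd, hMd⟩ := frechet_dval D₁ D₂ S hS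
  have case1 : 0 ≤ dval D₁ D₂ S → 0 < dval D₁ D₂ (fun u v => min u v) →
      0 ≤ dval D₁ D₂ S / dval D₁ D₂ (fun u v => min u v) ∧
      dval D₁ D₂ S / dval D₁ D₂ (fun u v => min u v) ≤ 1 :=
    fun hd hM => ⟨div_nonneg hd hM.le, (div_le_one hM).mpr hMd⟩
  have case2 : dval D₁ D₂ S ≤ 0 → dval D₁ D₂ (fun u v => max (u + v - 1) 0) < 0 →
      -1 ≤ -(dval D₁ D₂ S / dval D₁ D₂ (fun u v => max (u + v - 1) 0)) ∧
      -(dval D₁ D₂ S / dval D₁ D₂ (fun u v => max (u + v - 1) 0)) ≤ 0 := by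
    intro hd hW
    have hq1 : dval D₁ D₂ S / dval D₁ D₂ (fun u v => max (u + v - 1) 0) ≤ 1 :=
      (div_le_iff_of_neg hW).mpr (by linarith)
    have hq0 : 0 ≤ dval D₁ D₂ S / dval D₁ D₂ (fun u v => max (u + v - 1) 0) :=
      div_nonneg_iff.mpr (Or.inr ⟨hd, hW.le⟩)
    exact ⟨by linarith, by linarith⟩
  refine ⟨case1, case2, ?_⟩
  unfold mu
  split_ifs with hA hB
  · obtain ⟨ha, hb⟩ := case1 hA.1 hA.2
    exact ⟨by linarith, hb⟩
  · obtain ⟨ha, hb⟩ := case2 hB.1 hB.2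
    exact ⟨ha, by linarith⟩
  · norm_num
end

section
/- Let S be a bivariate subcopula with domain D₁ × D₂, let D₂' := {1 − v : v ∈ D₂}, and define S' : D₁ × D₂' → [0,1] by S'(u,v) := u − S(u, 1 − v). Then d(S') = −d(S). -/
/-- The reflection `S'(u,v) = u − S(u, 1−v)` on `D₁ × {1 − v : v ∈ D₂}`
satisfies `d(S') = −d(S)`. -/
theorem dval_reflect (D₁ D₂ : Set ℝ) (S : ℝ → ℝ → ℝ)
    (hS : IsSubcopula D₁ D₂ S) :
    dval D₁ {w : ℝ | ∃ v ∈ D₂, w = 1 - v} (fun u v => u - S u (1 - v)) =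
      -dval D₁ D₂ S := by
  unfold dval
  have h1 : {x : ℝ | ∃ u ∈ D₁, ∃ w ∈ {w : ℝ | ∃ v ∈ D₂, w = 1 - v},
      x = (fun u v => u - S u (1 - v)) u w - u * w}
      = {x : ℝ | ∃ u ∈ D₁, ∃ v ∈ D₂, x = u * v - S u v} := by
    ext x
    constructor
    · rintro ⟨u, hu, w, ⟨v, hv, rfl⟩, rfl⟩
      exact ⟨u, hu, v, hv, by simp; ring⟩
    · rintro ⟨u, hu, v, hv, rfl⟩
      exact ⟨u, hu, 1 - v, ⟨v, hv, rfl⟩, by simp; ring⟩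
  have h2 : {x : ℝ | ∃ u ∈ D₁, ∃ w ∈ {w : ℝ | ∃ v ∈ D₂, w = 1 - v},
      x = u * w - (fun u v => u - S u (1 - v)) u w}
      = {x : ℝ | ∃ u ∈ D₁, ∃ v ∈ D₂, x = S u v - u * v} := by
    ext x
    constructor
    · rintro ⟨u, hu, w, ⟨v, hv, rfl⟩, rfl⟩
      exact ⟨u, hu, v, hv, by simp; ring⟩
    · rintro ⟨u, hu, v, hv, rfl⟩
      exact ⟨u, hu, 1 - v, ⟨v, hv, rfl⟩, by simp; ring⟩
  rw [h1, h2]; ring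
end

section
/- Let X be a real-valued random variable on a probability space (Ω, 𝓕, P), let g : ℝ → ℝ be monotone nonincreasing, and set Y := g ∘ X. Then for all x, y ∈ ℝ: P(X ≤ x and Y ≤ y) = max(P(X ≤ x) + P(Y ≤ y) − 1, 0); that is, the joint distribution function of (X, Y) equals the Fréchet–Hoeffding lower bound W(F_X(x), F_Y(y)) = max(F_X(x) + F_Y(y) − 1, 0). -/
open MeasureTheory

/-- If `Y = g ∘ X` with `g` monotone nonincreasing, the joint distribution
function of `(X, Y)` equals the Fréchet–Hoeffding lower bound
`W(F_X(x), F_Y(y)) = max(F_X(x) + F_Y(y) − 1, 0)`. -/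
theorem joint_cdf_antitone_eq_max
    {Ω : Type*} [MeasurableSpace Ω] (P : Measure Ω) [IsProbabilityMeasure P]
    (X : Ω → ℝ) (hX : Measurable X) (g : ℝ → ℝ) (hg : Antitone g)
    (Y : Ω → ℝ) (hY : Y = g ∘ X) (x y : ℝ) :
    (P {ω | X ω ≤ x ∧ Y ω ≤ y}).toReal =
      max ((P {ω | X ω ≤ x}).toReal + (P {ω | Y ω ≤ y}).toReal - 1) 0 := by
  subst hY
  set A : Set Ω := {ω | X ω ≤ x} with hAdef
  set B : Set Ω := {ω | (g ∘ X) ω ≤ y} with hBdef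
  have hA : MeasurableSet A := measurableSet_le hX measurable_const
  have hB : MeasurableSet B := measurableSet_le (hg.measurable.comp hX) measurable_const
  have hset : {ω | X ω ≤ x ∧ (g ∘ X) ω ≤ y} = A ∩ B := rfl
  rw [hset]
  have hAne : P A ≠ ⊤ := measure_ne_top _ _
  have hBne : P B ≠ ⊤ := measure_ne_top _ _
  by_cases h : ∃ t, t ≤ x ∧ g t ≤ y
  · obtain ⟨t, htx, hty⟩ := h
    have hcov : A ∪ B = Set.univ := by
      ext ω
      simp only [Set.mem_union, Set.mem_univ, iff_true, hAdef, hBdef, Set.mem_setOf_eq,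
        Function.comp_apply]
      by_cases hω : X ω ≤ x
      · exact Or.inl hω
      · exact Or.inr (le_trans (hg (le_trans htx (le_of_not_ge hω))) hty)
    have key : P (A ∪ B) + P (A ∩ B) = P A + P B := measure_union_add_inter A hB
    rw [hcov, measure_univ] at key
    have key' : 1 + (P (A ∩ B)).toReal = (P A).toReal + (P B).toReal := by
      have := congrArg ENNReal.toReal key
      rwa [ENNReal.toReal_add (by simp) (measure_ne_top _ _),
        ENNReal.toReal_add hAne hBne, ENNReal.toReal_one] at this
    have hnn : (0:ℝ) ≤ (P (A ∩ B)).toReal := ENNReal.toReal_nonneg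
    rw [max_eq_left (by linarith)]
    linarith
  · push_neg at h
    have hdisj : A ∩ B = ∅ := by
      ext ω
      simp only [Set.mem_inter_iff, Set.mem_empty_iff_false, iff_false, hAdef, hBdef,
        Set.mem_setOf_eq, Function.comp_apply, not_and]
      exact fun hx => (h _ hx).not_ge
    have hle : P A + P B ≤ 1 := by
      rw [← measure_union (Set.disjoint_iff_inter_eq_empty.mpr hdisj) hB]
      exact prob_le_one
    have hle' : (P A).toReal + (P B).toReal ≤ 1 := by
      rw [← ENNReal.toReal_add hAne hBne]
      exact ENNReal.toReal_le_of_le_ofReal one_pos.le (by simpa using hle)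
    rw [hdisj, measure_empty, max_eq_right (by linarith)]
    simp
end

section
/- Let 0 < θ₁ < 1, 0 < θ₂ < 1, and max(θ₁ + θ₂ − 1, 0) ≤ α ≤ min(θ₁, θ₂). Let S be the subcopula with domain D₁ × D₂ = {0, 1−θ₁, 1} × {0, 1−θ₂, 1} determined by S(u,0) = 0 = S(0,v), S(u,1) = u, S(1,v) = v, and S(1−θ₁, 1−θ₂) = 1 + α − θ₁ − θ₂. Then d(S) = α − θ₁θ₂. -/
/-- For the Bernoulli subcopula with parameters `θ₁, θ₂` and dependence
parameter `α`: `d(S) = α − θ₁θ₂`. -/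
theorem dval_bernoulli_subcopula (θ₁ θ₂ α : ℝ)
    (hθ₁ : 0 < θ₁) (hθ₁' : θ₁ < 1) (hθ₂ : 0 < θ₂) (hθ₂' : θ₂ < 1)
    (hα₁ : max (θ₁ + θ₂ - 1) 0 ≤ α) (hα₂ : α ≤ min θ₁ θ₂)
    (S : ℝ → ℝ → ℝ)
    (hb₁ : ∀ v ∈ ({0, 1 - θ₂, 1} : Set ℝ), S 0 v = 0)
    (hb₂ : ∀ u ∈ ({0, 1 - θ₁, 1} : Set ℝ), S u 0 = 0)
    (hb₃ : ∀ u ∈ ({0, 1 - θ₁, 1} : Set ℝ), S u 1 = u)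
    (hb₄ : ∀ v ∈ ({0, 1 - θ₂, 1} : Set ℝ), S 1 v = v)
    (hmid : S (1 - θ₁) (1 - θ₂) = 1 + α - θ₁ - θ₂) :
    dval ({0, 1 - θ₁, 1} : Set ℝ) ({0, 1 - θ₂, 1} : Set ℝ) S = α - θ₁ * θ₂ := by
  have hu₁ : (1 - θ₁ : ℝ) ∈ ({0, 1 - θ₁, 1} : Set ℝ) := by simp
  have hv₁ : (1 - θ₂ : ℝ) ∈ ({0, 1 - θ₂, 1} : Set ℝ) := by simp
  have h00 : S (1-θ₁) 0 = 0 := hb₂ _ hu₁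
  have h0v : S 0 (1-θ₂) = 0 := hb₁ _ hv₁
  have h1v : S 1 (1-θ₂) = 1-θ₂ := hb₄ _ hv₁
  have hu1 : S (1-θ₁) 1 = 1-θ₁ := hb₃ _ hu₁
  set c : ℝ := α - θ₁ * θ₂ with hc
  have hset1 : {x : ℝ | ∃ u ∈ ({0, 1 - θ₁, 1} : Set ℝ), ∃ v ∈ ({0, 1 - θ₂, 1} : Set ℝ),
      x = S u v - u * v} = {0, c} := by
    ext x
    constructor
    · rintro ⟨u, hu, v, hv, rfl⟩
      rcases hu with rfl | rfl | rfl <;> rcases hv with rfl | rfl | rfl <;>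
        simp_all <;> ring_nf <;> simp_all <;> ring_nf <;> left <;> ring
    · rintro (rfl | rfl)
      · exact ⟨0, by simp, 0, by simp, by simp [hb₁ 0 (by simp)]⟩
      · exact ⟨1-θ₁, hu₁, 1-θ₂, hv₁, by rw [hmid]; ring⟩
  have hset2 : {x : ℝ | ∃ u ∈ ({0, 1 - θ₁, 1} : Set ℝ), ∃ v ∈ ({0, 1 - θ₂, 1} : Set ℝ),
      x = u * v - S u v} = {0, -c} := by
    ext x
    constructor
    · rintro ⟨u, hu, v, hv, rfl⟩
      rcases hu with rfl | rfl | rfl <;> rcases hv with rfl | rfl | rfl <;>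
        simp_all <;> ring_nf <;> simp_all <;> ring_nf <;> left <;> ring
    · rintro (rfl | rfl)
      · exact ⟨0, by simp, 0, by simp, by simp [hb₁ 0 (by simp)]⟩
      · exact ⟨1-θ₁, hu₁, 1-θ₂, hv₁, by rw [hmid]; ring⟩
  rw [dval, hset1, hset2, csSup_pair, csSup_pair]
  rcases le_total c 0 with h | h
  · rw [sup_eq_left.mpr h, sup_eq_right.mpr (by linarith)]; ring
  · rw [sup_eq_right.mpr h, sup_eq_left.mpr (by linarith)]; ring
end

section
/- Let 0 < θ₁ < 1 and 0 < θ₂ < 1, and let M_S be the restriction of M(u,v) = min(u,v) to the domain D₁ × D₂ = {0, 1−θ₁, 1} × {0, 1−θ₂, 1}. Then d(M_S) = θ₂(1−θ₁) if θ₁ ≥ θ₂, and d(M_S) = θ₁(1−θ₂) if θ₁ ≤ θ₂. -/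
lemma dval_M_key (a b : ℝ) (ha : 0 < a) (ha' : a < 1) (hb : 0 < b) (hb' : b < 1)
    (hba : b ≤ a) :
    dval ({0, 1 - a, 1} : Set ℝ) ({0, 1 - b, 1} : Set ℝ)
      (fun u v => min u v) = b * (1 - a) := by
  unfold dval
  have h1 : sSup {x : ℝ | ∃ u ∈ ({0, 1 - a, 1} : Set ℝ), ∃ v ∈ ({0, 1 - b, 1} : Set ℝ),
      x = (fun u v => min u v) u v - u * v} = b * (1 - a) := by
    apply IsGreatest.csSup_eq
    constructor
    · refine ⟨1 - a, by simp, 1 - b, by simp, ?_⟩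
      simp only
      rw [min_eq_left (by linarith)]
      ring
    · rintro x ⟨u, hu, v, hv, rfl⟩
      simp only [Set.mem_insert_iff, Set.mem_singleton_iff] at hu hv
      rcases hu with rfl | rfl | rfl <;> rcases hv with rfl | rfl | rfl <;>
        simp only [min_def] <;> split_ifs <;> nlinarith
  have h2 : sSup {x : ℝ | ∃ u ∈ ({0, 1 - a, 1} : Set ℝ), ∃ v ∈ ({0, 1 - b, 1} : Set ℝ),
      x = u * v - (fun u v => min u v) u v} = 0 := by
    apply IsGreatest.csSup_eq
    constructor
    · exact ⟨0, by simp, 0, by simp, by simp⟩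
    · rintro x ⟨u, hu, v, hv, rfl⟩
      simp only [Set.mem_insert_iff, Set.mem_singleton_iff] at hu hv
      rcases hu with rfl | rfl | rfl <;> rcases hv with rfl | rfl | rfl <;>
        simp only [min_def] <;> split_ifs <;> nlinarith
  rw [h1, h2]
  ring

lemma dval_M_swap (A B : Set ℝ) :
    dval A B (fun u v => min u v) = dval B A (fun u v => min u v) := by
  unfold dval
  have e1 : {x : ℝ | ∃ u ∈ A, ∃ v ∈ B, x = (fun u v => min u v) u v - u * v} =
      {x : ℝ | ∃ u ∈ B, ∃ v ∈ A, x = (fun u v => min u v) u v - u * v} := by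
    ext x
    constructor <;> rintro ⟨u, hu, v, hv, rfl⟩ <;>
      exact ⟨v, hv, u, hu, by simp only [min_comm, mul_comm]⟩
  have e2 : {x : ℝ | ∃ u ∈ A, ∃ v ∈ B, x = u * v - (fun u v => min u v) u v} =
      {x : ℝ | ∃ u ∈ B, ∃ v ∈ A, x = u * v - (fun u v => min u v) u v} := by
    ext x
    constructor <;> rintro ⟨u, hu, v, hv, rfl⟩ <;>
      exact ⟨v, hv, u, hu, by simp only [min_comm, mul_comm]⟩
  rw [e1, e2]

/-- `d(M_S)` on the Bernoulli domain `{0, 1−θ₁, 1} × {0, 1−θ₂, 1}`. -/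
theorem dval_M_bernoulli_domain (θ₁ θ₂ : ℝ)
    (hθ₁ : 0 < θ₁) (hθ₁' : θ₁ < 1) (hθ₂ : 0 < θ₂) (hθ₂' : θ₂ < 1) :
    (θ₂ ≤ θ₁ →
      dval ({0, 1 - θ₁, 1} : Set ℝ) ({0, 1 - θ₂, 1} : Set ℝ)
        (fun u v => min u v) = θ₂ * (1 - θ₁)) ∧
    (θ₁ ≤ θ₂ →
      dval ({0, 1 - θ₁, 1} : Set ℝ) ({0, 1 - θ₂, 1} : Set ℝ)
        (fun u v => min u v) = θ₁ * (1 - θ₂)) := by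
  constructor
  · intro h
    exact dval_M_key θ₁ θ₂ hθ₁ hθ₁' hθ₂ hθ₂' h
  · intro h
    rw [dval_M_swap]
    exact dval_M_key θ₂ θ₁ hθ₂ hθ₂' hθ₁ hθ₁' h
end

section
/- Let 0 < θ₁ < 1 and 0 < θ₂ < 1, and let W_S be the restriction of W(u,v) = max(u+v−1,0) to the domain D₁ × D₂ = {0, 1−θ₁, 1} × {0, 1−θ₂, 1}. Then −d(W_S) = θ₁θ₂ if θ₂ ≤ 1 − θ₁, and −d(W_S) = (1−θ₁)(1−θ₂) if θ₂ ≥ 1 − θ₁. -/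
/-- `−d(W_S)` on the Bernoulli domain `{0, 1−θ₁, 1} × {0, 1−θ₂, 1}`. -/
theorem dval_W_bernoulli_domain (θ₁ θ₂ : ℝ)
    (hθ₁ : 0 < θ₁) (hθ₁' : θ₁ < 1) (hθ₂ : 0 < θ₂) (hθ₂' : θ₂ < 1) :
    (θ₂ ≤ 1 - θ₁ →
      -dval ({0, 1 - θ₁, 1} : Set ℝ) ({0, 1 - θ₂, 1} : Set ℝ)
        (fun u v => max (u + v - 1) 0) = θ₁ * θ₂) ∧
    (1 - θ₁ ≤ θ₂ →
      -dval ({0, 1 - θ₁, 1} : Set ℝ) ({0, 1 - θ₂, 1} : Set ℝ)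
        (fun u v => max (u + v - 1) 0) = (1 - θ₁) * (1 - θ₂)) := by
  have key : ∀ c : ℝ, c = (1-θ₁)*(1-θ₂) - max (1-θ₁-θ₂) 0 →
      -dval ({0, 1 - θ₁, 1} : Set ℝ) ({0, 1 - θ₂, 1} : Set ℝ)
        (fun u v => max (u + v - 1) 0) = c := by
    intro c hc
    have hc0 : 0 ≤ c := by
      rcases le_total (1-θ₁-θ₂) 0 with h | h
      · rw [hc, max_eq_right h]; nlinarith
      · rw [hc, max_eq_left h]; nlinarith
    have h1 : sSup {x : ℝ | ∃ u ∈ ({0, 1 - θ₁, 1} : Set ℝ), ∃ v ∈ ({0, 1 - θ₂, 1} : Set ℝ),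
        x = (fun u v => max (u + v - 1) 0) u v - u * v} = 0 := by
      apply IsGreatest.csSup_eq
      constructor
      · exact ⟨0, by simp, 0, by simp, by norm_num⟩
      · rintro x ⟨u, hu, v, hv, rfl⟩
        have hub : 0 ≤ u ∧ u ≤ 1 := by
          rcases hu with rfl | rfl | rfl <;> constructor <;> linarith
        have hvb : 0 ≤ v ∧ v ≤ 1 := by
          rcases hv with rfl | rfl | rfl <;> constructor <;> linarith
        simp only
        have : max (u + v - 1) 0 ≤ u * v := by
          apply max_le
          · nlinarith [hub.1, hub.2, hvb.1, hvb.2]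
          · nlinarith [hub.1, hvb.1]
        linarith
    have h2 : sSup {x : ℝ | ∃ u ∈ ({0, 1 - θ₁, 1} : Set ℝ), ∃ v ∈ ({0, 1 - θ₂, 1} : Set ℝ),
        x = u * v - (fun u v => max (u + v - 1) 0) u v} = c := by
      apply IsGreatest.csSup_eq
      have hW : ∀ u v : ℝ, u ≤ 1 → v ≤ 1 → (u = 0 ∨ u = 1 ∨ v = 0 ∨ v = 1) →
          u * v - max (u + v - 1) 0 ≤ 0 := by
        intro u v hu hv h
        have h1 := le_max_left (u + v - 1) 0
        have h2 := le_max_right (u + v - 1) 0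
        rcases h with rfl | rfl | rfl | rfl <;> nlinarith
      constructor
      · refine ⟨1-θ₁, by simp, 1-θ₂, by simp, ?_⟩
        show c = (1-θ₁)*(1-θ₂) - max (1-θ₁+(1-θ₂)-1) 0
        rw [hc, show (1:ℝ)-θ₁+(1-θ₂)-1 = 1-θ₁-θ₂ from by ring]
      · rintro x ⟨u, hu, v, hv, rfl⟩
        rcases hu with rfl | rfl | rfl <;> rcases hv with rfl | rfl | rfl <;> simp only <;>
          first
          | rw [hc, show (1:ℝ)-θ₁+(1-θ₂)-1 = 1-θ₁-θ₂ from by ring]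
          | exact le_trans (hW _ _ (by linarith) (by linarith) (by norm_num)) hc0
    unfold dval
    rw [h1, h2]; ring
  constructor
  · intro h
    rw [key (θ₁*θ₂) (by rw [max_eq_left (by linarith)]; ring)]
  · intro h
    rw [key ((1-θ₁)*(1-θ₂)) (by rw [max_eq_right (by linarith)]; ring)]
end

section
/- Let D₁, D₂ ⊆ [0,1] be sets each containing 0 and 1, let 0 ≤ α ≤ 1, and define S_α : D₁ × D₂ → [0,1] by S_α(u,v) := α·min(u,v) + (1−α)·uv. Then S_α is a bivariate subcopula, d(S_α) = α·d(M_{S_α}) where M_{S_α} is the restriction of M(u,v) = min(u,v) to D₁ × D₂, and if d(M_{S_α}) > 0 then the monotone dependence measure satisfies μ(S_α) = α. -/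
/-! `S_α − Π = α (M − Π)`, so both suprema defining `d(S_α)` are those defining `d(M)`
scaled by `α ≥ 0`: `d(S_α) = α d(M) ≥ 0`, whence `μ(S_α) = α`. Subcopulas on a fixed domain
form a convex set containing `M` and `Π`. -/

section

variable {D₁ D₂ : Set ℝ}

theorem isSubcopula_min (hD₁ : D₁ ⊆ Set.Icc 0 1) (hD₂ : D₂ ⊆ Set.Icc 0 1)
    (h01 : (0 : ℝ) ∈ D₁) (h11 : (1 : ℝ) ∈ D₁) (h02 : (0 : ℝ) ∈ D₂) (h12 : (1 : ℝ) ∈ D₂) :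
    IsSubcopula D₁ D₂ (fun u v => min u v) := by
  refine ⟨hD₁, hD₂, h01, h11, h02, h12, fun u hu v hv => ?_, fun u hu => ?_, fun v hv => ?_,
    fun u hu => ?_, fun v hv => ?_, fun u₁ _ u₂ _ v₁ _ v₂ _ hu hv => ?_⟩
  · exact ⟨le_min (hD₁ hu).1 (hD₂ hv).1, min_le_of_left_le (hD₁ hu).2⟩
  · exact min_eq_right (hD₁ hu).1
  · exact min_eq_left (hD₂ hv).1
  · exact min_eq_left (hD₁ hu).2
  · exact min_eq_right (hD₂ hv).2
  · simp only [min_def]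
    split_ifs <;> linarith

theorem isSubcopula_mul (hD₁ : D₁ ⊆ Set.Icc 0 1) (hD₂ : D₂ ⊆ Set.Icc 0 1)
    (h01 : (0 : ℝ) ∈ D₁) (h11 : (1 : ℝ) ∈ D₁) (h02 : (0 : ℝ) ∈ D₂) (h12 : (1 : ℝ) ∈ D₂) :
    IsSubcopula D₁ D₂ (fun u v => u * v) := by
  refine ⟨hD₁, hD₂, h01, h11, h02, h12, fun u hu v hv => ?_, fun u _ => mul_zero u,
    fun v _ => zero_mul v, fun u _ => mul_one u, fun v _ => one_mul v,
    fun u₁ _ u₂ _ v₁ _ v₂ _ hu hv => ?_⟩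
  · obtain ⟨hu0, hu1⟩ := hD₁ hu
    obtain ⟨hv0, hv1⟩ := hD₂ hv
    exact ⟨mul_nonneg hu0 hv0, mul_le_one₀ hu1 hv0 hv1⟩
  · exact (mul_nonneg (sub_nonneg.2 hu) (sub_nonneg.2 hv)).trans_eq (by ring)

theorem IsSubcopula.convex_combination {S T : ℝ → ℝ → ℝ} (hS : IsSubcopula D₁ D₂ S)
    (hT : IsSubcopula D₁ D₂ T) {α : ℝ} (hα₀ : 0 ≤ α) (hα₁ : α ≤ 1) :
    IsSubcopula D₁ D₂ (fun u v => α * S u v + (1 - α) * T u v) := by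
  obtain ⟨hD₁, hD₂, h01, h11, h02, h12, hSI, hS0, hS0', hS1, hS1', hS2⟩ := hS
  obtain ⟨-, -, -, -, -, -, hTI, hT0, hT0', hT1, hT1', hT2⟩ := hT
  have hβ : 0 ≤ 1 - α := sub_nonneg.2 hα₁
  refine ⟨hD₁, hD₂, h01, h11, h02, h12, fun u hu v hv => ?_,
    fun u hu => by simp [hS0 u hu, hT0 u hu], fun v hv => by simp [hS0' v hv, hT0' v hv],
    fun u hu => by simp only [hS1 u hu, hT1 u hu]; ring,
    fun v hv => by simp only [hS1' v hv, hT1' v hv]; ring,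
    fun u₁ hu₁ u₂ hu₂ v₁ hv₁ v₂ hv₂ hu hv => ?_⟩
  · obtain ⟨hS_nonneg, hS_le_one⟩ := hSI u hu v hv
    obtain ⟨hT_nonneg, hT_le_one⟩ := hTI u hu v hv
    constructor <;> nlinarith
  · have hSrect := mul_nonneg hα₀ (hS2 u₁ hu₁ u₂ hu₂ v₁ hv₁ v₂ hv₂ hu hv)
    have hTrect := mul_nonneg hβ (hT2 u₁ hu₁ u₂ hu₂ v₁ hv₁ v₂ hv₂ hu hv)
    linarith

open scoped Pointwise in
theorem sSup_exists_mem_mul {α : ℝ} (hα : 0 ≤ α) (f : ℝ → ℝ → ℝ) :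
    sSup {x : ℝ | ∃ u ∈ D₁, ∃ v ∈ D₂, x = α * f u v} =
      α * sSup {x : ℝ | ∃ u ∈ D₁, ∃ v ∈ D₂, x = f u v} := by
  have hset : {x : ℝ | ∃ u ∈ D₁, ∃ v ∈ D₂, x = α * f u v} =
      α • {x : ℝ | ∃ u ∈ D₁, ∃ v ∈ D₂, x = f u v} := by
    ext x
    simp only [Set.mem_smul_set, Set.mem_ofPred_eq, smul_eq_mul]
    constructor
    · rintro ⟨u, hu, v, hv, rfl⟩
      exact ⟨f u v, ⟨u, hu, v, hv, rfl⟩, rfl⟩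
    · rintro ⟨y, ⟨u, hu, v, hv, rfl⟩, rfl⟩
      exact ⟨u, hu, v, hv, rfl⟩
  rw [hset, Real.sSup_smul_of_nonneg hα, smul_eq_mul]

theorem dval_convex_combination_mul {α : ℝ} (hα : 0 ≤ α) (S : ℝ → ℝ → ℝ) :
    dval D₁ D₂ (fun u v => α * S u v + (1 - α) * (u * v)) = α * dval D₁ D₂ S := by
  have hpos : ∀ u v, α * S u v + (1 - α) * (u * v) - u * v = α * (S u v - u * v) :=
    fun _ _ => by ring
  have hneg : ∀ u v, u * v - (α * S u v + (1 - α) * (u * v)) = α * (u * v - S u v) :=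
    fun _ _ => by ring
  simp only [dval, hpos, hneg]
  rw [sSup_exists_mem_mul hα, sSup_exists_mem_mul hα, mul_sub]

theorem mu_eq_of_dval_eq_mul {S : ℝ → ℝ → ℝ} {c : ℝ} (hc : 0 ≤ c)
    (hM : 0 < dval D₁ D₂ (fun u v => min u v))
    (hS : dval D₁ D₂ S = c * dval D₁ D₂ (fun u v => min u v)) :
    mu D₁ D₂ S = c := by
  have hS₀ : 0 ≤ dval D₁ D₂ S := hS ▸ mul_nonneg hc hM.le
  rw [mu, if_pos ⟨hS₀, hM⟩, hS, mul_div_cancel_right₀ c hM.ne']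

end

/-- For `S_α(u,v) = α·min(u,v) + (1−α)·uv` on any subcopula domain: `S_α` is a
subcopula, `d(S_α) = α·d(M_{S_α})`, and `μ(S_α) = α` whenever `d(M_{S_α}) > 0`. -/
theorem convex_combination_M_Pi (D₁ D₂ : Set ℝ) (α : ℝ)
    (hD₁ : D₁ ⊆ Set.Icc 0 1) (hD₂ : D₂ ⊆ Set.Icc 0 1)
    (h01 : (0 : ℝ) ∈ D₁) (h11 : (1 : ℝ) ∈ D₁)
    (h02 : (0 : ℝ) ∈ D₂) (h12 : (1 : ℝ) ∈ D₂)
    (hα₀ : 0 ≤ α) (hα₁ : α ≤ 1) :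
    IsSubcopula D₁ D₂ (fun u v => α * min u v + (1 - α) * (u * v)) ∧
    dval D₁ D₂ (fun u v => α * min u v + (1 - α) * (u * v)) =
      α * dval D₁ D₂ (fun u v => min u v) ∧
    (0 < dval D₁ D₂ (fun u v => min u v) →
      mu D₁ D₂ (fun u v => α * min u v + (1 - α) * (u * v)) = α) := by
  have hd := dval_convex_combination_mul (D₁ := D₁) (D₂ := D₂) hα₀ (fun u v => min u v)
  exact ⟨(isSubcopula_min hD₁ hD₂ h01 h11 h02 h12).convex_combination
      (isSubcopula_mul hD₁ hD₂ h01 h11 h02 h12) hα₀ hα₁,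
    hd, fun hM => mu_eq_of_dval_eq_mul hα₀ hM hd⟩
end

section
/- Let n ≥ 1 and let D = {k/n : k = 0, 1, …, n} ⊆ [0,1]. Then the maximum over (u,v) ∈ D × D of min(u,v) − uv and the maximum over (u,v) ∈ D × D of uv − max(u+v−1, 0) are both equal to 1/4 if n is even, and both equal to (n² − 1)/(4n²) if n is odd. Equivalently, for subcopulas with domain D × D one has −d(W_{S_n}) = d(M_{S_n}) = 1/4 for n even and (n²−1)/(4n²) for n odd. -/
/-!
On the grid, write `u = j/n` and `v = k/n`. Both gaps have the form `ab/n²` with natural numbers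
`a + b ≤ n`: for `min u v - uv` take `a = min j k`, `b = n - max j k`; for
`uv - max (u + v - 1) 0` take `(a, b) = (j, k)` if `j + k ≤ n` and `(n - j, n - k)` otherwise.
Under `a + b ≤ n` the product `ab` is largest at `a = ⌊n/2⌋`, `b = ⌈n/2⌉`, and both gaps attain
this value, so both suprema equal `⌊n/2⌋⌈n/2⌉/n²`.
-/

theorem mul_le_half_mul_half_of_add_le {a b n : ℕ} (h : a + b ≤ n) :
    a * b ≤ n / 2 * (n - n / 2) := by
  obtain ⟨m, rfl | rfl⟩ := Nat.even_or_odd' n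
  · rw [show 2 * m / 2 = m by omega, show 2 * m - m = m by omega]
    have : (a : ℤ) * b ≤ m * m := by nlinarith [sq_nonneg ((a : ℤ) - b)]
    exact_mod_cast this
  · rw [show (2 * m + 1) / 2 = m by omega, show 2 * m + 1 - m = m + 1 by omega]
    -- integrality: `(a - m) * (a - m - 1) ≥ 0`, whichever side of `m` the integer `a` lies on
    rcases le_or_gt a m with ha | ha <;> nlinarith

namespace EmpiricalGrid

def grid (n : ℕ) : Set ℝ := {x : ℝ | ∃ k : ℕ, k ≤ n ∧ x = (k : ℝ) / n}

noncomputable def gridMax (n : ℕ) : ℝ := ((n / 2 * (n - n / 2) : ℕ) : ℝ) / (n : ℝ) ^ 2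

theorem div_sq_le_gridMax {a b n : ℕ} (h : a + b ≤ n) :
    ((a * b : ℕ) : ℝ) / (n : ℝ) ^ 2 ≤ gridMax n := by
  unfold gridMax
  gcongr ?_ / _
  exact_mod_cast mul_le_half_mul_half_of_add_le h

variable {n j k : ℕ}

theorem min_sub_mul_of_le (hn : n ≠ 0) (hjk : j ≤ k) (hk : k ≤ n) :
    min ((j : ℝ) / n) ((k : ℝ) / n) - (j : ℝ) / n * ((k : ℝ) / n) =
      ((j * (n - k) : ℕ) : ℝ) / (n : ℝ) ^ 2 := by
  rw [min_eq_left (by gcongr)]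
  push_cast [hk]
  field_simp

theorem mul_sub_max_of_add_le (hn : n ≠ 0) (h : j + k ≤ n) :
    (j : ℝ) / n * ((k : ℝ) / n) - max ((j : ℝ) / n + (k : ℝ) / n - 1) 0 =
      ((j * k : ℕ) : ℝ) / (n : ℝ) ^ 2 := by
  have : (j : ℝ) / n + (k : ℝ) / n ≤ 1 := by
    rw [← add_div, div_le_one (by positivity)]
    exact_mod_cast h
  rw [max_eq_right (by linarith)]
  push_cast
  field_simp
  ring

theorem mul_sub_max_of_le_add (hn : n ≠ 0) (hj : j ≤ n) (hk : k ≤ n) (h : n ≤ j + k) :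
    (j : ℝ) / n * ((k : ℝ) / n) - max ((j : ℝ) / n + (k : ℝ) / n - 1) 0 =
      (((n - j) * (n - k) : ℕ) : ℝ) / (n : ℝ) ^ 2 := by
  have : 1 ≤ (j : ℝ) / n + (k : ℝ) / n := by
    rw [← add_div, one_le_div (by positivity)]
    exact_mod_cast h
  rw [max_eq_left (by linarith)]
  push_cast [hj, hk]
  field_simp
  ring

theorem isGreatest_min_sub_mul (hn : n ≠ 0) :
    IsGreatest {x : ℝ | ∃ u ∈ grid n, ∃ v ∈ grid n, x = min u v - u * v} (gridMax n) := by
  refine ⟨⟨_, ⟨n / 2, Nat.div_le_self n 2, rfl⟩, _, ⟨n / 2, Nat.div_le_self n 2, rfl⟩, ?_⟩, ?_⟩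
  · rw [min_sub_mul_of_le hn le_rfl (Nat.div_le_self n 2)]
    rfl
  · rintro _ ⟨_, ⟨j, hj, rfl⟩, _, ⟨k, hk, rfl⟩, rfl⟩
    rcases le_total j k with hjk | hkj
    · rw [min_sub_mul_of_le hn hjk hk]
      exact div_sq_le_gridMax (by omega)
    · rw [min_comm, mul_comm, min_sub_mul_of_le hn hkj hj]
      exact div_sq_le_gridMax (by omega)

theorem isGreatest_mul_sub_max (hn : n ≠ 0) :
    IsGreatest {x : ℝ | ∃ u ∈ grid n, ∃ v ∈ grid n, x = u * v - max (u + v - 1) 0}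
      (gridMax n) := by
  refine ⟨⟨_, ⟨n / 2, Nat.div_le_self n 2, rfl⟩, _, ⟨n - n / 2, Nat.sub_le n _, rfl⟩, ?_⟩, ?_⟩
  · rw [mul_sub_max_of_add_le hn (by omega)]
    rfl
  · rintro _ ⟨_, ⟨j, hj, rfl⟩, _, ⟨k, hk, rfl⟩, rfl⟩
    rcases le_total (j + k) n with h | h
    · rw [mul_sub_max_of_add_le hn h]
      exact div_sq_le_gridMax h
    · rw [mul_sub_max_of_le_add hn hj hk h]
      exact div_sq_le_gridMax (by omega)

theorem gridMax_of_even (hn : n ≠ 0) (he : Even n) : gridMax n = 1 / 4 := by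
  obtain ⟨m, rfl⟩ := he
  rw [gridMax, show (m + m) / 2 = m by omega, show m + m - m = m by omega]
  have : (m : ℝ) ≠ 0 := by exact_mod_cast (by omega : m ≠ 0)
  push_cast
  field_simp
  ring

theorem gridMax_of_odd (ho : Odd n) : gridMax n = ((n : ℝ) ^ 2 - 1) / (4 * (n : ℝ) ^ 2) := by
  obtain ⟨m, rfl⟩ := ho
  rw [gridMax, show (2 * m + 1) / 2 = m by omega, show 2 * m + 1 - m = m + 1 by omega]
  push_cast
  field_simp
  ring

end EmpiricalGrid

open EmpiricalGrid

/-- On the empirical-subcopula grid `D = {k/n : k = 0, …, n}`, the suprema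
`d(M_{Sₙ}) = sup{min(u,v) − uv}` and `−d(W_{Sₙ}) = sup{uv − max(u+v−1,0)}` are
both `1/4` for even `n` and `(n² − 1)/(4n²)` for odd `n`. -/
theorem dval_M_W_grid (n : ℕ) (hn : 1 ≤ n)
    (D : Set ℝ) (hD : D = {x : ℝ | ∃ k : ℕ, k ≤ n ∧ x = (k : ℝ) / n}) :
    (Even n →
      sSup {x : ℝ | ∃ u ∈ D, ∃ v ∈ D, x = min u v - u * v} = 1/4 ∧
      sSup {x : ℝ | ∃ u ∈ D, ∃ v ∈ D, x = u * v - max (u + v - 1) 0} = 1/4) ∧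
    (Odd n →
      sSup {x : ℝ | ∃ u ∈ D, ∃ v ∈ D, x = min u v - u * v} =
        ((n : ℝ)^2 - 1) / (4 * (n : ℝ)^2) ∧
      sSup {x : ℝ | ∃ u ∈ D, ∃ v ∈ D, x = u * v - max (u + v - 1) 0} =
        ((n : ℝ)^2 - 1) / (4 * (n : ℝ)^2)) := by
  have hn0 : n ≠ 0 := by omega
  obtain rfl : D = grid n := hD
  rw [(isGreatest_min_sub_mul hn0).csSup_eq, (isGreatest_mul_sub_max hn0).csSup_eq]
  exact ⟨fun he => ⟨gridMax_of_even hn0 he, gridMax_of_even hn0 he⟩,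
    fun ho => ⟨gridMax_of_odd ho, gridMax_of_odd ho⟩⟩
end
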